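/- Let x = (x₀, …, x_ℓ) and x' = (x'₀, …, x'_ℓ) be tuples with x_j, x'_j ∈ X_j for all j and x₀⋯x_ℓ = x'₀⋯x'_ℓ. Then there exists a unique tuple ĥ = (ĥ₀, …, ĥ_ℓ) with ĥ_j ∈ X_j, ĥ₀ĥ₁⋯ĥ_ℓ = 1, and x ⊗ ĥ = x'; that is, the fiber S_g of the product map acts simply transitively on itself by right twisted multiplication by elements of S_1. -/

import Mathlib

/-!
The twisted product is compatible with the product map, `∏ (x ⊗ y) = (∏ x) (∏ y)`, and for fixed
`x` the equation `x ⊗ h = x'` is solved componentwise by the unique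
`h_j = S_j(x)⁻¹ (x_j⁻¹ x'_j) S_j(x)`. This `h_j` lies in `X_j` because `X_j` is normal, and
`∏ h = (∏ x)⁻¹ (∏ x') = 1` when `x` and `x'` lie in the same fibre.
-/

/-- `tailProd x j = S_j(x) = x_{j+1} x_{j+2} ⋯ x_ℓ` (with `tailProd x ℓ = 1`). -/
def tailProd {B : Type*} [Group B] {n : ℕ} (x : Fin n → B) (j : Fin n) : B :=
  ((List.ofFn x).drop ((j : ℕ) + 1)).prod

/-- The twisted product: `(x ⊗ y)_j = x_j · S_j(x) y_j S_j(x)⁻¹`. -/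
def twmul {B : Type*} [Group B] {n : ℕ} (x y : Fin n → B) : Fin n → B :=
  fun j => x j * (tailProd x j * y j * (tailProd x j)⁻¹)

section TwistedProduct

variable {B : Type*} [Group B] {n : ℕ}

def twdiv (x x' : Fin n → B) : Fin n → B :=
  fun j => (tailProd x j)⁻¹ * ((x j)⁻¹ * x' j) * tailProd x j

lemma tailProd_zero (x : Fin (n + 1) → B) :
    tailProd x 0 = (List.ofFn fun i => x i.succ).prod := by
  simp [tailProd, List.ofFn_succ]

lemma tailProd_succ (x : Fin (n + 1) → B) (j : Fin n) :
    tailProd x j.succ = tailProd (fun i => x i.succ) j := by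
  simp [tailProd, List.ofFn_succ, Fin.val_succ]

lemma twmul_succ (x y : Fin (n + 1) → B) (j : Fin n) :
    twmul x y j.succ = twmul (fun i => x i.succ) (fun i => y i.succ) j := by
  simp only [twmul, tailProd_succ]

lemma prod_ofFn_twmul : ∀ {n : ℕ} (x y : Fin n → B),
    (List.ofFn (twmul x y)).prod = (List.ofFn x).prod * (List.ofFn y).prod
  | 0, _, _ => by simp
  | n + 1, x, y => by
    simp only [List.ofFn_succ (f := twmul x y), twmul_succ, List.prod_cons,
      prod_ofFn_twmul, List.ofFn_succ (f := x), List.ofFn_succ (f := y)]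
    rw [twmul, tailProd_zero]
    group

lemma twmul_eq_iff {x y x' : Fin n → B} : twmul x y = x' ↔ y = twdiv x x' := by
  simp only [funext_iff, twmul, twdiv]
  refine forall_congr' fun j => ?_
  constructor
  · intro h
    rw [← h]
    group
  · intro h
    rw [h]
    group

lemma twmul_twdiv (x x' : Fin n → B) : twmul x (twdiv x x') = x' :=
  twmul_eq_iff.mpr rfl

lemma prod_ofFn_twdiv (x x' : Fin n → B) :
    (List.ofFn (twdiv x x')).prod = (List.ofFn x).prod⁻¹ * (List.ofFn x').prod := by
  rw [eq_inv_mul_iff_mul_eq, ← prod_ofFn_twmul, twmul_twdiv]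

lemma twdiv_mem {X : Fin n → Subgroup B} (hnorm : ∀ j, (X j).Normal) {x x' : Fin n → B}
    (hx : ∀ j, x j ∈ X j) (hx' : ∀ j, x' j ∈ X j) (j : Fin n) : twdiv x x' j ∈ X j := by
  simpa [twdiv] using
    (hnorm j).conj_mem _ (mul_mem (inv_mem (hx j)) (hx' j)) (tailProd x j)⁻¹

end TwistedProduct

theorem stmt19_general {B : Type*} [Group B] (ℓ : ℕ) (X : Fin (ℓ + 1) → Subgroup B)
    (hnorm : ∀ j : Fin (ℓ + 1), (X j).Normal)
    (x x' : Fin (ℓ + 1) → B)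
    (hx : ∀ j, x j ∈ X j) (hx' : ∀ j, x' j ∈ X j)
    (hprod : (List.ofFn x).prod = (List.ofFn x').prod) :
    ∃! h : Fin (ℓ + 1) → B,
      (∀ j, h j ∈ X j) ∧ (List.ofFn h).prod = 1 ∧ twmul x h = x' := by
  refine ⟨twdiv x x', ⟨twdiv_mem hnorm hx hx', ?_, twmul_twdiv x x'⟩, ?_⟩
  · rw [prod_ofFn_twdiv, hprod, inv_mul_cancel]
  · rintro h ⟨-, -, hh⟩
    exact twmul_eq_iff.mp hh

theorem stmt19 {B : Type*} [Group B] (ℓ : ℕ) (X : Fin (ℓ + 1) → Subgroup B)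
    (hmono : ∀ j k : Fin (ℓ + 1), j ≤ k → X j ≤ X k)
    (htop : X (Fin.last ℓ) = ⊤)
    (hnorm : ∀ j : Fin (ℓ + 1), (X j).Normal)
    (x x' : Fin (ℓ + 1) → B)
    (hx : ∀ j, x j ∈ X j) (hx' : ∀ j, x' j ∈ X j)
    (hprod : (List.ofFn x).prod = (List.ofFn x').prod) :
    ∃! h : Fin (ℓ + 1) → B,
      (∀ j, h j ∈ X j) ∧ (List.ofFn h).prod = 1 ∧ twmul x h = x' :=
  stmt19_general ℓ X hnorm x x' hx hx' hprod
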